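/- arXiv:1809.09822 — 2 statements merged into one kernel-verified Lean document; each statement's English description precedes it below -/
import Mathlib

section
/- For any real y, σ > 0, and real N > 1: ∑_{l=0}^{3} (∑_{j=0}^∞ H_{4j+l}(iy)·N^{-(4j+l)σ})·(∑_{k=0}^∞ H_{4k+l}(iy)·N^{-(4k+l)σ}) = (1/4)·∑_{j=0}^{3} exp(-2iy·log|1 - i^j/N^σ|), where all series converge absolutely. -/
/-!
Write `u = iy` and `t = N^(-σ)`. For `|z| < 1` the coefficients `H r u` are those of the binomial
series of `(1 - z)^(-u)`, so by the orthogonality of the fourth roots of unity the residue-class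
sums `A_l = ∑_j H (4j+l) u t^(4j+l)` are the discrete Fourier coefficients
`A_l = ¼ ∑_n i^(-ln) (1 - iⁿ t)^(-u)`. Squaring and summing over `l`, orthogonality again keeps only
the products with `n + m ≡ 0 (mod 4)`, i.e. `1 - iᵐ t = conj (1 - iⁿ t)`, and for such a pair
`w^(-iy) · (conj w)^(-iy) = exp (-2iy log |w|)`.
-/

open Complex

/-- `H r u = u(u+1)⋯(u+r-1)/r!`, with `H 0 u = 1`. -/
noncomputable def H (r : ℕ) (u : ℂ) : ℂ :=
  (∏ j ∈ Finset.range r, (u + j)) / (r.factorial : ℂ)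

open Finset

lemma H_eq_choose (r : ℕ) (u : ℂ) : H r u = Ring.choose (u + r - 1) r := by
  have hprod : (ascPochhammer ℂ r).eval u = ∏ j ∈ range r, (u + j) := by
    induction r with
    | zero => simp
    | succ r ih => rw [ascPochhammer_succ_eval, ih, prod_range_succ]
  have h := Ring.factorial_nsmul_multichoose_eq_ascPochhammer u r
  rw [Polynomial.ascPochhammer_smeval_cast, Polynomial.ascPochhammer_smeval_eq_eval, hprod,
    nsmul_eq_mul] at h
  rw [H, ← Ring.multichoose_eq, ← h,
    mul_div_cancel_left₀ _ (by exact_mod_cast r.factorial_ne_zero)]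

lemma hasSum_H_mul_pow (u : ℂ) {z : ℂ} (hz : ‖z‖ < 1) :
    HasSum (fun r => H r u * z ^ r) ((1 - z) ^ (-u)) := by
  have h := (one_div_one_sub_cpow_hasFPowerSeriesOnBall_zero u).hasSum (y := z)
    (by rw [← ENNReal.ofReal_one, Metric.eball_ofReal]; simpa using hz)
  simpa [H_eq_choose, FormalMultilinearSeries.ofScalars, cpow_neg, mul_comm] using h

namespace IsPrimitiveRoot

variable {K : Type*} [Field K] {ζ : K} {k : ℕ}

theorem geom_sum_zpow_eq_ite (hζ : IsPrimitiveRoot ζ k) (m : ℤ) :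
    ∑ n ∈ range k, (ζ ^ m) ^ n = if (k : ℤ) ∣ m then (k : K) else 0 := by
  split_ifs with hm
  · simp [(hζ.zpow_eq_one_iff_dvd m).2 hm]
  · have hne : ζ ^ m ≠ 1 := mt (hζ.zpow_eq_one_iff_dvd m).1 hm
    rw [geom_sum_eq hne, ← zpow_natCast, ← zpow_mul, mul_comm, zpow_mul, zpow_natCast,
      hζ.pow_eq_one, one_zpow, sub_self, zero_div]

theorem geom_sum_pow_eq_ite (hζ : IsPrimitiveRoot ζ k) (m : ℕ) :
    ∑ n ∈ range k, (ζ ^ m) ^ n = if k ∣ m then (k : K) else 0 := by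
  simpa [Int.natCast_dvd_natCast] using hζ.geom_sum_zpow_eq_ite m

theorem hasSum_comp_mul_add [TopologicalSpace K] [IsTopologicalRing K]
    (hζ : IsPrimitiveRoot ζ k) {a S : ℕ → K} {l : ℕ} (hl : l < k)
    (h : ∀ n < k, HasSum (fun r => a r * (ζ ^ n) ^ r) (S n)) :
    HasSum (fun j => a (k * j + l)) ((k : K)⁻¹ * ∑ n ∈ range k, (ζ⁻¹ ^ l) ^ n * S n) := by
  have hk : (k : K) ≠ 0 := by
    have : NeZero k := ⟨by omega⟩
    exact hζ.neZero'.out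
  have hdvd : ∀ r : ℕ, (k : ℤ) ∣ (r : ℤ) - l ↔ ∃ j, k * j + l = r := by
    intro r
    rw [← Nat.modEq_iff_dvd, Nat.ModEq, Nat.mod_eq_of_lt hl]
    constructor
    · intro hr
      exact ⟨r / k, by rw [hr]; exact Nat.div_add_mod r k⟩
    · rintro ⟨j, rfl⟩
      rw [Nat.mul_add_mod, Nat.mod_eq_of_lt hl]
  have hfilter : HasSum (fun r : ℕ => if (k : ℤ) ∣ (r : ℤ) - l then (k : K) * a r else 0)
      (∑ n ∈ range k, (ζ⁻¹ ^ l) ^ n * S n) := by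
    refine (hasSum_sum fun n hn => (h n (mem_range.1 hn)).mul_left ((ζ⁻¹ ^ l) ^ n)).congr_fun ?_
    intro r
    have hterm : ∑ n ∈ range k, (ζ⁻¹ ^ l) ^ n * (a r * (ζ ^ n) ^ r)
        = a r * ∑ n ∈ range k, (ζ ^ ((r : ℤ) - l)) ^ n := by
      rw [mul_sum]
      refine sum_congr rfl fun n _ => ?_
      rw [zpow_sub₀ (hζ.ne_zero (by omega)), zpow_natCast, zpow_natCast, div_eq_mul_inv,
        ← inv_pow]
      ring
    rw [hterm, hζ.geom_sum_zpow_eq_ite]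
    split_ifs <;> ring
  have hinj : Function.Injective (fun j : ℕ => k * j + l) := fun i j hij => by
    simpa [show k ≠ 0 by omega] using hij
  rw [← hinj.hasSum_iff fun r hr => if_neg fun hd => hr ((hdvd r).1 hd)] at hfilter
  refine (hfilter.mul_left (k : K)⁻¹).congr_fun fun j => ?_
  rw [Function.comp_apply, if_pos ((hdvd _).2 ⟨j, rfl⟩), inv_mul_cancel_left₀ hk]

theorem sum_mul_self_eq (hζ : IsPrimitiveRoot ζ k) (F : ℕ → K) :
    ∑ l ∈ range k, (∑ n ∈ range k, (ζ ^ l) ^ n * F n) * (∑ m ∈ range k, (ζ ^ l) ^ m * F m) =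
      k * ∑ n ∈ range k, ∑ m ∈ range k, if k ∣ n + m then F n * F m else 0 := by
  simp_rw [sum_mul_sum, mul_sum]
  rw [sum_comm]
  refine sum_congr rfl fun n _ => ?_
  rw [sum_comm]
  refine sum_congr rfl fun m _ => ?_
  have hterm : ∀ l, (ζ ^ l) ^ n * F n * ((ζ ^ l) ^ m * F m) = F n * F m * (ζ ^ (n + m)) ^ l := by
    intro l; ring
  simp_rw [hterm, ← mul_sum, hζ.geom_sum_pow_eq_ite]
  split_ifs <;> ring

end IsPrimitiveRoot

lemma cpow_mul_conj_cpow {z : ℂ} (hz : z ∈ slitPlane) (w : ℂ) :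
    z ^ w * (starRingEnd ℂ z) ^ w = exp (2 * Real.log ‖z‖ * w) := by
  have hz0 := slitPlane_ne_zero hz
  rw [cpow_def_of_ne_zero hz0, cpow_def_of_ne_zero ((map_ne_zero _).2 hz0), ← exp_add,
    log_conj _ (slitPlane_arg_ne_pi hz), ← add_mul, add_conj, log_re]
  push_cast
  ring

lemma one_sub_cpow_mul_one_sub_conj_cpow (y : ℝ) {z : ℂ} (hz : ‖z‖ < 1) :
    (1 - z) ^ (-(I * y)) * (1 - starRingEnd ℂ z) ^ (-(I * y)) =
      exp (-2 * I * y * Real.log ‖1 - z‖) := by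
  have hslit : 1 - z ∈ slitPlane := by
    simpa [sub_eq_add_neg] using mem_slitPlane_of_norm_lt_one (z := -z) (by simpa using hz)
  have hconj : 1 - starRingEnd ℂ z = starRingEnd ℂ (1 - z) := by rw [map_sub, map_one]
  rw [hconj, cpow_mul_conj_cpow hslit]
  congr 1
  ring

lemma conj_I_pow_of_dvd {n m : ℕ} (h : 4 ∣ n + m) : starRingEnd ℂ (I ^ n) = I ^ m := by
  have h1 : I ^ m * I ^ n = 1 := by
    rw [← pow_add, add_comm, isPrimitiveRoot_I.pow_eq_one_iff_dvd]
    exact h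
  rw [map_pow, conj_I, ← inv_I, inv_pow, eq_inv_of_mul_eq_one_left h1]

lemma one_sub_I_pow_mul_cpow_mul_of_dvd (y : ℝ) {t : ℝ} (ht : |t| < 1) {n m : ℕ} (h : 4 ∣ n + m) :
    (1 - I ^ n * t) ^ (-(I * y)) * (1 - I ^ m * t) ^ (-(I * y)) =
      exp (-2 * I * y * Real.log ‖1 - I ^ n * t‖) := by
  have hconj : I ^ m * t = starRingEnd ℂ (I ^ n * t) := by
    rw [map_mul, conj_I_pow_of_dvd h, conj_ofReal]
  rw [hconj, one_sub_cpow_mul_one_sub_conj_cpow y (by simpa using ht)]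

lemma summable_norm_H_mul_pow (u : ℂ) {z : ℂ} (hz : ‖z‖ < 1) :
    Summable (fun r => ‖H r u * z ^ r‖) :=
  (hasSum_H_mul_pow u hz).summable.norm

lemma hasSum_H_mul_pow_four_mul_add (u : ℂ) {t : ℂ} (ht : ‖t‖ < 1) {l : ℕ} (hl : l < 4) :
    HasSum (fun j => H (4 * j + l) u * t ^ (4 * j + l))
      (4⁻¹ * ∑ n ∈ range 4, (I⁻¹ ^ l) ^ n * (1 - I ^ n * t) ^ (-u)) := by
  have hS : ∀ n, HasSum (fun r => H r u * t ^ r * (I ^ n) ^ r) ((1 - I ^ n * t) ^ (-u)) :=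
    fun n => (hasSum_H_mul_pow u (by simpa using ht)).congr_fun fun r => by ring
  exact_mod_cast isPrimitiveRoot_I.hasSum_comp_mul_add hl fun n _ => hS n

lemma ofReal_rpow_neg_natCast_mul {N : ℝ} (hN : 0 ≤ N) (σ : ℝ) (r : ℕ) :
    ((N ^ (-(r : ℝ) * σ) : ℝ) : ℂ) = (((N ^ σ)⁻¹ : ℝ) : ℂ) ^ r := by
  rw [mul_comm, Real.rpow_mul hN, Real.rpow_neg (Real.rpow_nonneg hN σ), Real.rpow_natCast]
  push_cast
  rw [inv_pow]

theorem stmt7 (y σ N : ℝ) (hσ : 0 < σ) (hN : 1 < N) :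
    (∀ l ∈ Finset.range 4, Summable (fun j : ℕ =>
        ‖H (4 * j + l) (Complex.I * y) *
          ((N ^ (-((4 * j + l : ℕ) : ℝ) * σ) : ℝ) : ℂ)‖)) ∧
    ∑ l ∈ Finset.range 4,
        (∑' j : ℕ, H (4 * j + l) (Complex.I * y) *
            ((N ^ (-((4 * j + l : ℕ) : ℝ) * σ) : ℝ) : ℂ)) *
          (∑' k : ℕ, H (4 * k + l) (Complex.I * y) *
            ((N ^ (-((4 * k + l : ℕ) : ℝ) * σ) : ℝ) : ℂ)) =
      (1 / 4) * ∑ j ∈ Finset.range 4,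
        Complex.exp (-2 * Complex.I * y *
          Real.log ‖1 - Complex.I ^ j / ((N ^ σ : ℝ) : ℂ)‖) := by
  simp_rw [ofReal_rpow_neg_natCast_mul (by positivity : 0 ≤ N), div_eq_mul_inv, ← ofReal_inv]
  set t : ℝ := (N ^ σ)⁻¹
  have ht : |t| < 1 := by
    rw [abs_of_pos (by positivity)]
    exact inv_lt_one_of_one_lt₀ (Real.one_lt_rpow hN hσ)
  have ht' : ‖(t : ℂ)‖ < 1 := by simpa using ht
  refine ⟨fun l _ => ?_, ?_⟩
  · exact (summable_norm_H_mul_pow _ ht').comp_injective fun i j h => by simpa using h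
  · rw [sum_congr rfl fun l hl => by
      rw [(hasSum_H_mul_pow_four_mul_add _ ht' (mem_range.1 hl)).tsum_eq]]
    simp_rw [mul_mul_mul_comm, ← mul_sum]
    rw [isPrimitiveRoot_I.inv.sum_mul_self_eq, sum_congr rfl fun n _ => sum_congr rfl fun m _ =>
      ite_congr rfl (one_sub_I_pow_mul_cpow_mul_of_dvd y ht) fun _ => rfl]
    simp only [sum_range_succ, sum_range_zero]
    norm_num
    ring
end

section
/- Let σ > 1/2 be real and y ∈ ℝ. The infinite product ∏_{𝔭 ∤ (2)} M_{σ,𝔭}(y), taken over prime ideals 𝔭 of ℤ[i] not dividing (2), with M_{σ,𝔭}(y) = 1/(N(𝔭)+1) + (1/4)·(N(𝔭)/(N(𝔭)+1))·∑_{j=0}^{3} exp(-2iy·log|1 - i^j/N(𝔭)^σ|), converges absolutely. -/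
/-!
Pairing `j` with `j + 2` pairs `z = iʲ N(𝔭)^{-σ}` with `-z`. Since `(1 - z)(1 + z) = 1 - z²`, the
first-order terms of `exp (-2iy log |1 ∓ z|)` cancel, so `M_{σ,𝔭}(y) - 1 = O_y(N(𝔭)^{-2σ})`.
Every ideal of `ℤ[i]` is principal with `N((α)) = |α|²`, so `∑ N(𝔭)^{-2σ}` is dominated by the
lattice sum `∑_{α ≠ 0} |α|^{-4σ}`, which converges because `4σ > 2`. Finally, a product `∏ (1 + aₚ)`
with `∑ |aₚ| < ∞` converges.
-/

open Complex

/-- The norm of an ideal of `ℤ[i]`: the cardinality of the quotient ring. -/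
noncomputable def idealNorm (p : Ideal GaussianInt) : ℕ := Nat.card (GaussianInt ⧸ p)

/-- The local factor `M_{σ,𝔭}(y)`. -/
noncomputable def localFactor (σ y : ℝ) (p : Ideal GaussianInt) : ℂ :=
  (1 / ((idealNorm p : ℝ) + 1) : ℝ) +
    (1 / 4) * (((idealNorm p : ℝ) / ((idealNorm p : ℝ) + 1)) : ℝ) *
      ∑ j ∈ Finset.range 4,
        Complex.exp (-2 * Complex.I * y *
          Real.log ‖1 - Complex.I ^ j / (((idealNorm p : ℝ) ^ σ : ℝ) : ℂ)‖)

namespace GaussianInt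

-- The target `Fin 2 → ℤ`, with its sup norm, is where `EisensteinSeries.summable_one_div_norm_rpow`
-- lives.
def reImEquiv : GaussianInt ≃+ (Fin 2 → ℤ) where
  toFun α := ![α.re, α.im]
  invFun v := ⟨v 0, v 1⟩
  left_inv _ := rfl
  right_inv v := by ext i; fin_cases i <;> rfl
  map_add' _ _ := by ext i; fin_cases i <;> rfl

noncomputable def basisReIm : Module.Basis (Fin 2) ℤ GaussianInt :=
  .ofEquivFun reImEquiv.toIntLinearEquiv

instance : Module.Free ℤ GaussianInt := .of_basis basisReIm
instance : Module.Finite ℤ GaussianInt := .of_basis basisReIm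

theorem basisReIm_zero : basisReIm 0 = 1 := by
  rw [basisReIm, Module.Basis.coe_ofEquivFun]
  rfl

theorem basisReIm_one : basisReIm 1 = ⟨0, 1⟩ := by
  rw [basisReIm, Module.Basis.coe_ofEquivFun]
  rfl

theorem basisReIm_repr (α : GaussianInt) : basisReIm.repr α = ![α.re, α.im] := rfl

theorem algebraNorm_eq_norm (α : GaussianInt) : Algebra.norm ℤ α = α.norm := by
  rw [Algebra.norm_eq_matrix_det basisReIm, Matrix.det_fin_two]
  simp [Algebra.leftMulMatrix_eq_repr_mul, basisReIm_zero, basisReIm_one, basisReIm_repr,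
    Zsqrtd.norm_def]

theorem sq_norm_reImEquiv_le (α : GaussianInt) :
    ‖reImEquiv α‖ ^ 2 ≤ (α.re : ℝ) ^ 2 + (α.im : ℝ) ^ 2 := by
  have hle : ‖reImEquiv α‖ ≤ √((α.re : ℝ) ^ 2 + (α.im : ℝ) ^ 2) := by
    refine (pi_norm_le_iff_of_nonneg (Real.sqrt_nonneg _)).2 fun i => ?_
    rw [Int.norm_eq_abs]
    fin_cases i
    · exact Real.abs_le_sqrt (le_add_of_nonneg_right (sq_nonneg _))
    · exact Real.abs_le_sqrt (le_add_of_nonneg_left (sq_nonneg _))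
  calc ‖reImEquiv α‖ ^ 2 ≤ √((α.re : ℝ) ^ 2 + (α.im : ℝ) ^ 2) ^ 2 := by gcongr
    _ = _ := Real.sq_sqrt (by positivity)

end GaussianInt

theorem idealNorm_eq_absNorm (I : Ideal GaussianInt) : idealNorm I = Ideal.absNorm I := rfl

theorem two_le_idealNorm {I : Ideal GaussianInt} (hbot : I ≠ ⊥) (htop : I ≠ ⊤) :
    2 ≤ idealNorm I := by
  have h0 : idealNorm I ≠ 0 := by rwa [idealNorm_eq_absNorm, Ne, Ideal.absNorm_eq_zero_iff]
  have h1 : idealNorm I ≠ 1 := by rwa [idealNorm_eq_absNorm, Ne, Ideal.absNorm_eq_one_iff]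
  omega

theorem idealNorm_span_singleton (α : GaussianInt) :
    (idealNorm (Ideal.span {α}) : ℝ) = (α.re : ℝ) ^ 2 + (α.im : ℝ) ^ 2 := by
  rw [idealNorm_eq_absNorm, Ideal.absNorm_span_singleton, GaussianInt.algebraNorm_eq_norm,
    GaussianInt.natCast_natAbs_norm, Zsqrtd.norm_def]
  push_cast
  ring

theorem summable_idealNorm_rpow_neg {s : ℝ} (hs : 1 < s) :
    Summable fun I : {I : Ideal GaussianInt // I ≠ ⊥} => (idealNorm I : ℝ) ^ (-s) := by
  let g (I : {I : Ideal GaussianInt // I ≠ ⊥}) : GaussianInt := Submodule.IsPrincipal.generator I.1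
  have hspan (I) : Ideal.span {g I} = I.1 := Ideal.span_singleton_generator I.1
  have hg (I) : g I ≠ 0 := by
    rw [Ne, ← Submodule.IsPrincipal.eq_bot_iff_generator_eq_zero]; exact I.2
  have hinj : Function.Injective (GaussianInt.reImEquiv ∘ g) := fun I J h =>
    Subtype.ext <| by rw [← hspan I, ← hspan J, GaussianInt.reImEquiv.injective h]
  refine ((EisensteinSeries.summable_one_div_norm_rpow (by linarith : 2 < 2 * s)).comp_injective
    hinj).of_nonneg_of_le (fun I => by positivity) fun I => ?_
  have hpos : 0 < ‖GaussianInt.reImEquiv (g I)‖ := by simpa using hg I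
  calc (idealNorm I.1 : ℝ) ^ (-s)
      ≤ (‖GaussianInt.reImEquiv (g I)‖ ^ 2) ^ (-s) := by
        rw [← hspan I, idealNorm_span_singleton]
        exact Real.rpow_le_rpow_of_nonpos (by positivity) (GaussianInt.sq_norm_reImEquiv_le _) (by linarith)
    _ = ‖GaussianInt.reImEquiv (g I)‖ ^ (-(2 * s)) := by
        rw [← Real.rpow_natCast, ← Real.rpow_mul hpos.le]; norm_num

noncomputable def logPhase (y : ℝ) (z : ℂ) : ℂ := exp (-2 * I * y * Real.log ‖1 - z‖)

theorem norm_logPhase_sub_one_le (y : ℝ) (z : ℂ) :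
    ‖logPhase y z - 1‖ ≤ 2 * |y| * |Real.log ‖1 - z‖| := by
  have h : -2 * I * y * Real.log ‖1 - z‖ = I * ((-2 * y * Real.log ‖1 - z‖ : ℝ) : ℂ) := by
    push_cast; ring
  rw [logPhase, h]
  refine Real.norm_exp_I_mul_ofReal_sub_one_le.trans_eq ?_
  rw [Real.norm_eq_abs, abs_mul, abs_mul]
  norm_num

theorem abs_log_le_of_abs_sub_one_le {x r : ℝ} (hr : r ≤ 3 / 4) (hx : |x - 1| ≤ r) :
    |Real.log x| ≤ 4 * r := by
  obtain ⟨hx₁, hx₂⟩ := abs_le.1 hx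
  have hx0 : 0 < x := by linarith
  have hlower : -4 * r ≤ 1 - x⁻¹ := by
    rw [← sub_nonneg, show 1 - x⁻¹ - -4 * r = (x - 1 + 4 * r * x) / x by field_simp; ring]
    exact div_nonneg (by nlinarith) hx0.le
  exact abs_le.2 ⟨by linarith [Real.one_sub_inv_le_log_of_pos hx0],
    by linarith [Real.log_le_sub_one_of_pos hx0]⟩

theorem abs_log_norm_one_sub_le {z : ℂ} (hz : ‖z‖ ≤ 3 / 4) :
    |Real.log ‖1 - z‖| ≤ 4 * ‖z‖ :=
  abs_log_le_of_abs_sub_one_le hz (by simpa using abs_norm_sub_norm_le (1 - z) 1)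

theorem logPhase_mul_logPhase_neg (y : ℝ) {z : ℂ} (hz : ‖z‖ < 1) :
    logPhase y z * logPhase y (-z) = logPhase y (z ^ 2) := by
  have hne (w : ℂ) (hw : ‖w‖ < 1) : ‖1 - w‖ ≠ 0 := by
    rw [norm_ne_zero_iff, sub_ne_zero]
    rintro rfl
    simp at hw
  rw [logPhase, logPhase, logPhase, ← exp_add, ← mul_add, ← ofReal_add,
    ← Real.log_mul (hne z hz) (hne (-z) (by rwa [norm_neg])), ← norm_mul]
  ring_nf

theorem norm_logPhase_add_logPhase_neg_sub_two_le (y : ℝ) {z : ℂ} (hz : ‖z‖ ≤ 3 / 4) :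
    ‖logPhase y z + logPhase y (-z) - 2‖ ≤ (8 * |y| + 64 * y ^ 2) * ‖z‖ ^ 2 := by
  have hlin (w : ℂ) (hw : ‖w‖ ≤ 3 / 4) : ‖logPhase y w - 1‖ ≤ 8 * |y| * ‖w‖ :=
    (norm_logPhase_sub_one_le y w).trans
      (by nlinarith [abs_log_norm_one_sub_le hw, abs_nonneg y])
  have hz2 : ‖z ^ 2‖ ≤ 3 / 4 := by rw [norm_pow]; nlinarith [norm_nonneg z]
  have hprod := logPhase_mul_logPhase_neg y (hz.trans_lt (by norm_num))
  calc ‖logPhase y z + logPhase y (-z) - 2‖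
      = ‖(logPhase y (z ^ 2) - 1) - (logPhase y z - 1) * (logPhase y (-z) - 1)‖ := by
        rw [← hprod]; ring_nf
    _ ≤ ‖logPhase y (z ^ 2) - 1‖ + ‖logPhase y z - 1‖ * ‖logPhase y (-z) - 1‖ := by
        rw [← norm_mul]; exact norm_sub_le _ _
    _ ≤ 8 * |y| * ‖z ^ 2‖ + (8 * |y| * ‖z‖) * (8 * |y| * ‖-z‖) := by
        gcongr
        exacts [hlin _ hz2, hlin _ hz, hlin _ (by rwa [norm_neg])]
    _ = (8 * |y| + 64 * y ^ 2) * ‖z‖ ^ 2 := by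
        rw [norm_pow, norm_neg, ← sq_abs y]; ring

theorem norm_sum_logPhase_sub_four_le (y : ℝ) {w : ℂ} (hw : ‖w‖ ≤ 3 / 4) :
    ‖∑ j ∈ Finset.range 4, logPhase y (I ^ j * w) - 4‖ ≤ (16 * |y| + 128 * y ^ 2) * ‖w‖ ^ 2 := by
  have hnorm (j : ℕ) : ‖I ^ j * w‖ = ‖w‖ := by simp
  have h2 : I ^ 2 * w = -(I ^ 0 * w) := by simp
  have h3 : I ^ 3 * w = -(I ^ 1 * w) := by rw [pow_succ, I_sq]; ring
  have hpair (j : ℕ) : ‖logPhase y (I ^ j * w) + logPhase y (-(I ^ j * w)) - 2‖ ≤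
      (8 * |y| + 64 * y ^ 2) * ‖w‖ ^ 2 := by
    simpa only [hnorm] using
      norm_logPhase_add_logPhase_neg_sub_two_le y ((hnorm j).trans_le hw)
  simp only [Finset.sum_range_succ, Finset.sum_range_zero, zero_add, h2, h3]
  calc _ = ‖(logPhase y (I ^ 0 * w) + logPhase y (-(I ^ 0 * w)) - 2) +
          (logPhase y (I ^ 1 * w) + logPhase y (-(I ^ 1 * w)) - 2)‖ := by ring_nf
    _ ≤ _ := (norm_add_le _ _).trans (by linarith [hpair 0, hpair 1])

theorem localFactor_sub_one_eq (σ y : ℝ) (p : Ideal GaussianInt) :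
    localFactor σ y p - 1 =
      ((idealNorm p / (idealNorm p + 1) / 4 : ℝ) : ℂ) *
        (∑ j ∈ Finset.range 4, logPhase y (I ^ j * ((idealNorm p : ℝ) ^ (-σ) : ℝ)) - 4) := by
  have hN : (0 : ℝ) ≤ idealNorm p := Nat.cast_nonneg _
  have hN1 : ((idealNorm p : ℝ) : ℂ) + 1 ≠ 0 := by
    exact_mod_cast (by positivity : (idealNorm p : ℝ) + 1 ≠ 0)
  simp only [localFactor, logPhase, Real.rpow_neg hN, ofReal_inv, ← div_eq_mul_inv]
  push_cast
  field_simp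
  ring

theorem norm_localFactor_sub_one_le (σ y : ℝ) (hσ : 1 / 2 < σ) {p : Ideal GaussianInt}
    (hp : 2 ≤ idealNorm p) :
    ‖localFactor σ y p - 1‖ ≤ (4 * |y| + 32 * y ^ 2) * (idealNorm p : ℝ) ^ (-(2 * σ)) := by
  have hN : (2 : ℝ) ≤ idealNorm p := by exact_mod_cast hp
  set N : ℝ := ((idealNorm p : ℕ) : ℝ)
  set t : ℝ := N ^ (-σ)
  have ht0 : 0 ≤ t := by positivity
  have ht2 : t ^ 2 = N ^ (-(2 * σ)) := by
    rw [← Real.rpow_natCast, ← Real.rpow_mul (by positivity)]; ring_nf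
  have ht : t ≤ 3 / 4 := by
    have : N ^ (-(2 * σ)) ≤ N ^ (-1 : ℝ) :=
      Real.rpow_le_rpow_of_exponent_le (by linarith) (by linarith)
    rw [Real.rpow_neg_one] at this
    nlinarith [inv_anti₀ (by norm_num : (0 : ℝ) < 2) hN]
  have hcoef : ‖((N / (N + 1) / 4 : ℝ) : ℂ)‖ ≤ 1 / 4 := by
    rw [norm_real, Real.norm_of_nonneg (by positivity), div_le_div_iff_of_pos_right (by norm_num),
      div_le_one (by positivity)]
    linarith
  have hsum := norm_sum_logPhase_sub_four_le y (w := (t : ℂ))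
    (by rwa [norm_real, Real.norm_of_nonneg ht0])
  rw [norm_real, Real.norm_of_nonneg ht0, ht2] at hsum
  rw [localFactor_sub_one_eq, norm_mul]
  calc _ ≤ 1 / 4 * ((16 * |y| + 128 * y ^ 2) * N ^ (-(2 * σ))) := by gcongr
    _ = _ := by ring

theorem stmt15 (σ y : ℝ) (hσ : 1 / 2 < σ) :
    Summable (fun p : {p : Ideal GaussianInt // p.IsPrime ∧ p ≠ ⊥ ∧ (2 : GaussianInt) ∉ p} =>
        ‖localFactor σ y p.1 - 1‖) ∧
    Multipliable (fun p : {p : Ideal GaussianInt // p.IsPrime ∧ p ≠ ⊥ ∧ (2 : GaussianInt) ∉ p} =>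
        localFactor σ y p.1) := by
  have hinj : Function.Injective
      fun p : {p : Ideal GaussianInt // p.IsPrime ∧ p ≠ ⊥ ∧ (2 : GaussianInt) ∉ p} =>
        (⟨p.1, p.2.2.1⟩ : {I : Ideal GaussianInt // I ≠ ⊥}) :=
    fun p q h => Subtype.ext (congrArg Subtype.val h :)
  have hsum : Summable
      fun p : {p : Ideal GaussianInt // p.IsPrime ∧ p ≠ ⊥ ∧ (2 : GaussianInt) ∉ p} =>
        ‖localFactor σ y p.1 - 1‖ :=
    (((summable_idealNorm_rpow_neg (s := 2 * σ) (by linarith)).comp_injective hinj).mul_left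
      (4 * |y| + 32 * y ^ 2)).of_nonneg_of_le (fun _ => norm_nonneg _)
      fun p => norm_localFactor_sub_one_le σ y hσ (two_le_idealNorm p.2.2.1 p.2.1.ne_top)
  exact ⟨hsum, by simpa using Complex.multipliable_one_add_of_summable hsum.of_norm⟩
end
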